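/- Let e = ⋀_{i=1}^{s} (ℓ_{i1} ∨ ℓ_{i2} ∨ ℓ_{i3}) be a 3CNF formula over propositional variables p₁,…,p_k, where each literal ℓ_{ij} is either some p_j or ∼p_j. Let e' be obtained from e by replacing every positive literal p_j by a fresh variable p̂_j and every negative literal ∼p_j by a fresh variable p̌_j, and by replacing every conjunction ∧ by the derived connective ⊓ (the disjunctions within clauses remaining ∨). Define ē = ∼( e' ⊓ ⨅_{j=1}^{k} ((p̂_j ∨ p̌_j) ⊓ (∼p̂_j ∨ ∼p̌_j)) ), all connectives interpreted as SAC connectives and ⊓ as the derived SAC operation below. Then e is classically satisfiable (some 2-valued valuation makes e true) if and only if ē is not a weak SAC tautology (some 3-valued valuation gives ē the value 0). -/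
import Mathlib


/-- The three truth values `0`, `1`, `⊥`. -/
inductive Tri : Type
  | zero : Tri
  | one : Tri
  | bot : Tri
deriving DecidableEq

/-- The negation `∼` on `3`: `∼0 = 1`, `∼1 = 0`, `∼⊥ = ⊥`. -/
def triNeg : Tri → Tri
  | .zero => .one
  | .one => .zero
  | .bot => .bot

/-- SAC conjunction: `x` if `y = ⊥`, `y` if `x = ⊥`, classical otherwise. -/
def sacAnd (x y : Tri) : Tri :=
  match x, y with
  | x, .bot => x
  | .bot, y => y
  | .one, .one => .one
  | _, _ => .zero

/-- SAC disjunction: `x` if `y = ⊥`, `y` if `x = ⊥`, classical otherwise. -/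
def sacOr (x y : Tri) : Tri :=
  match x, y with
  | x, .bot => x
  | .bot, y => y
  | .zero, .zero => .zero
  | _, _ => .one

/-- The derived SAC connective
`x ⊓ y = (x ∨ (y ∧ (x ∨ ∼y))) ∧ (y ∨ (x ∧ (y ∨ ∼x)))`. -/
def sqcap (x y : Tri) : Tri :=
  sacAnd (sacOr x (sacAnd y (sacOr x (triNeg y))))
    (sacOr y (sacAnd x (sacOr y (triNeg x))))

/-- A literal: the variable `p_idx`, positive or negated. -/
structure Lit where
  idx : ℕ
  pos : Bool

/-- A 3CNF clause `ℓ₁ ∨ ℓ₂ ∨ ℓ₃`. -/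
abbrev Clause := Lit × Lit × Lit

/-- Classical value of a literal under a 2-valued valuation. -/
def litCl (v : ℕ → Bool) (l : Lit) : Bool :=
  if l.pos then v l.idx else !(v l.idx)

/-- Classical value of a clause. -/
def clauseCl (v : ℕ → Bool) (c : Clause) : Bool :=
  litCl v c.1 || litCl v c.2.1 || litCl v c.2.2

/-- Classical value of a 3CNF formula (a conjunction of clauses). -/
def cnfCl (v : ℕ → Bool) (f : List Clause) : Bool :=
  f.all (clauseCl v)

/-- The fresh variable replacing a literal: the positive literal `p_j` becomes the
variable `p̂_j` (coded `2*j`), the negative literal `∼p_j` becomes `p̌_j`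
(coded `2*j+1`). Its value under a 3-valued valuation. -/
def litTr (v : ℕ → Tri) (l : Lit) : Tri :=
  if l.pos then v (2 * l.idx) else v (2 * l.idx + 1)

/-- SAC value of the translated clause (disjunctions within clauses stay `∨_SAC`). -/
def clauseTr (v : ℕ → Tri) (c : Clause) : Tri :=
  sacOr (sacOr (litTr v c.1) (litTr v c.2.1)) (litTr v c.2.2)

/-- Iterated `⊓` of a nonempty list of values. -/
def bigSqcap : List Tri → Tri
  | [] => Tri.one
  | x :: xs => xs.foldl sqcap x

/-- SAC value of the guard `(p̂_j ∨ p̌_j) ⊓ (∼p̂_j ∨ ∼p̌_j)` for variable `p_j`. -/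
def guardTr (v : ℕ → Tri) (j : ℕ) : Tri :=
  sqcap (sacOr (v (2 * j)) (v (2 * j + 1)))
    (sacOr (triNeg (v (2 * j))) (triNeg (v (2 * j + 1))))

/-- SAC value of `ē = ∼(e' ⊓ ⨅_{j<k} guard_j)` for the 3CNF `f` over variables
`p_0, …, p_{k-1}`, where all conjunctions are the derived connective `⊓`. -/
def ebarTr (v : ℕ → Tri) (f : List Clause) (k : ℕ) : Tri :=
  triNeg (sqcap (bigSqcap (f.map (clauseTr v)))
    (bigSqcap ((List.range k).map (guardTr v))))


lemma sqcap_eq_one {x y : Tri} : sqcap x y = Tri.one ↔ x = Tri.one ∧ y = Tri.one := by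
  cases x <;> cases y <;> simp [sqcap, sacAnd, sacOr, triNeg]

lemma foldl_sqcap_one (l : List Tri) (a : Tri) :
    l.foldl sqcap a = Tri.one ↔ a = Tri.one ∧ ∀ x ∈ l, x = Tri.one := by
  induction l generalizing a with
  | nil => simp
  | cons x xs ih =>
    simp only [List.foldl_cons, ih, sqcap_eq_one, List.mem_cons]
    constructor
    · rintro ⟨⟨ha, hx⟩, h⟩
      exact ⟨ha, by rintro y (rfl | hy); exact hx; exact h y hy⟩
    · rintro ⟨ha, h⟩
      exact ⟨⟨ha, h x (Or.inl rfl)⟩, fun y hy => h y (Or.inr hy)⟩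

lemma bigSqcap_one (l : List Tri) :
    bigSqcap l = Tri.one ↔ ∀ x ∈ l, x = Tri.one := by
  cases l with
  | nil => simp [bigSqcap]
  | cons x xs =>
    simp only [bigSqcap, foldl_sqcap_one, List.mem_cons]
    constructor
    · rintro ⟨ha, h⟩ y (rfl | hy); exact ha; exact h y hy
    · intro h; exact ⟨h x (Or.inl rfl), fun y hy => h y (Or.inr hy)⟩

lemma guard_char (a b : Tri)
    (h : sqcap (sacOr a b) (sacOr (triNeg a) (triNeg b)) = Tri.one) :
    (a = Tri.one ∧ b = Tri.zero) ∨ (a = Tri.zero ∧ b = Tri.one) := by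
  cases a <;> cases b <;> simp_all [sqcap, sacAnd, sacOr, triNeg]

lemma sacOr3_one (a b c : Tri) (ha : a ≠ Tri.bot) (hb : b ≠ Tri.bot) (hc : c ≠ Tri.bot)
    (h : sacOr (sacOr a b) c = Tri.one) :
    a = Tri.one ∨ b = Tri.one ∨ c = Tri.one := by
  cases a <;> cases b <;> cases c <;> simp_all [sacOr]

def b2t (b : Bool) : Tri := if b then Tri.one else Tri.zero

lemma sacOr_b2t (x y : Bool) : sacOr (b2t x) (b2t y) = b2t (x || y) := by
  cases x <;> cases y <;> rfl

/-- A 3CNF formula `f` over variables `p_0, …, p_{k-1}` is classically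
satisfiable iff `ē` is not a weak SAC tautology, i.e. some 3-valued valuation
gives `ē` the value `0`. -/
theorem cnf_sat_iff_ebar_not_weak_sac_tautology
    (f : List Clause) (hf : f ≠ []) (k : ℕ) (hk : 0 < k)
    (hidx : ∀ c ∈ f, c.1.idx < k ∧ c.2.1.idx < k ∧ c.2.2.idx < k) :
    (∃ v : ℕ → Bool, cnfCl v f = true) ↔
      (∃ v : ℕ → Tri, ebarTr v f k = Tri.zero) := by
  constructor
  · rintro ⟨v, hv⟩
    set w : ℕ → Tri := fun n =>
      if n % 2 = 0 then b2t (v (n / 2)) else b2t (!(v (n / 2))) with hw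
    have hweven : ∀ j, w (2 * j) = b2t (v j) := by
      intro j
      have h1 : (2 * j) % 2 = 0 := by omega
      have h2 : (2 * j) / 2 = j := by omega
      simp [hw, h1, h2]
    have hwodd : ∀ j, w (2 * j + 1) = b2t (!(v j)) := by
      intro j
      have h1 : (2 * j + 1) % 2 = 1 := by omega
      have h2 : (2 * j + 1) / 2 = j := by omega
      simp [hw, h1, h2]
    have hlit : ∀ l : Lit, litTr w l = b2t (litCl v l) := by
      intro l
      unfold litTr litCl
      cases hp : l.pos <;> simp [hp, hweven, hwodd]
    have hclause : ∀ c : Clause, clauseTr w c = b2t (clauseCl v c) := by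
      intro c
      unfold clauseTr clauseCl
      rw [hlit, hlit, hlit, sacOr_b2t, sacOr_b2t]
    refine ⟨w, ?_⟩
    unfold ebarTr
    have h1 : bigSqcap (f.map (clauseTr w)) = Tri.one := by
      rw [bigSqcap_one]
      intro x hx
      rw [List.mem_map] at hx
      obtain ⟨c, hc, rfl⟩ := hx
      rw [hclause]
      have : clauseCl v c = true := by
        have := List.all_eq_true.mp hv c hc
        simpa using this
      rw [this]; rfl
    have h2 : bigSqcap ((List.range k).map (guardTr w)) = Tri.one := by
      rw [bigSqcap_one]
      intro x hx
      rw [List.mem_map] at hx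
      obtain ⟨j, _, rfl⟩ := hx
      unfold guardTr
      rw [hweven, hwodd]
      cases v j <;> rfl
    rw [h1, h2]; rfl
  · rintro ⟨w, hw⟩
    unfold ebarTr at hw
    have h1 : sqcap (bigSqcap (f.map (clauseTr w)))
        (bigSqcap ((List.range k).map (guardTr w))) = Tri.one := by
      generalize hx : sqcap (bigSqcap (f.map (clauseTr w)))
        (bigSqcap ((List.range k).map (guardTr w))) = x at hw
      cases x <;> simp_all [triNeg]
    rw [sqcap_eq_one] at h1
    obtain ⟨hcl, hgd⟩ := h1
    rw [bigSqcap_one] at hcl hgd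
    have hguard : ∀ j < k, (w (2 * j) = Tri.one ∧ w (2 * j + 1) = Tri.zero) ∨
        (w (2 * j) = Tri.zero ∧ w (2 * j + 1) = Tri.one) := by
      intro j hj
      apply guard_char
      have := hgd (guardTr w j) (List.mem_map.mpr ⟨j, List.mem_range.mpr hj, rfl⟩)
      exact this
    set v : ℕ → Bool := fun j => decide (w (2 * j) = Tri.one) with hv
    have hvdef : ∀ j, v j = decide (w (2 * j) = Tri.one) := fun _ => rfl
    have hlitkey : ∀ l : Lit, l.idx < k → litTr w l = Tri.one → litCl v l = true := by
      intro l hl hone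
      unfold litTr at hone
      unfold litCl
      cases hp : l.pos
      · rw [hp] at hone
        simp only [Bool.false_eq_true, if_false] at hone ⊢
        rcases hguard l.idx hl with ⟨h1, h2⟩ | ⟨h1, h2⟩
        · rw [h2] at hone; exact absurd hone (by decide)
        · rw [hvdef, h1]; decide
      · rw [hp] at hone
        simp only [if_true] at hone ⊢
        rw [hvdef, hone]; decide
    have hlitnb : ∀ l : Lit, l.idx < k → litTr w l ≠ Tri.bot := by
      intro l hl
      unfold litTr
      rcases hguard l.idx hl with ⟨h1, h2⟩ | ⟨h1, h2⟩ <;> cases hp : l.pos <;>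
        simp only [hp, Bool.false_eq_true, if_false, if_true, h1, h2] <;> decide
    refine ⟨v, ?_⟩
    rw [cnfCl, List.all_eq_true]
    intro c hc
    obtain ⟨hi1, hi2, hi3⟩ := hidx c hc
    have hct : clauseTr w c = Tri.one := hcl _ (List.mem_map.mpr ⟨c, hc, rfl⟩)
    unfold clauseTr at hct
    have := sacOr3_one _ _ _ (hlitnb _ hi1) (hlitnb _ hi2) (hlitnb _ hi3) hct
    unfold clauseCl
    rcases this with h | h | h
    · simp [hlitkey c.1 hi1 h]
    · simp [hlitkey c.2.1 hi2 h]
    · simp [hlitkey c.2.2 hi3 h]
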